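/- Let T be a finitely aligned k-semigraph in which every element of T^(0) is idempotent, and let Δ = T ⊔ Δ_μ be the associated left-cancellative semimultiplicative set with operators λ_a (a ∈ Δ) on ℓ²(Δ). Then for all x,y ∈ T the Cuntz–Krieger type relation holds: λ_x* λ_y = Σ_{(e,f) ∈ T^min(x,y)} λ_e (λ_{yf}* λ_{yf}) λ_f* (a finite sum). -/

import Mathlib

/-- A semimultiplicative set: a partially defined associative multiplication,
encoded via `Option`: `mul s t = some u` means "`st` is defined and equals `u`". -/
structure SemimultSet (T : Type*) where
  mul : T → T → Option T
  assoc : ∀ s t u : T,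
    (mul s t).bind (fun x => mul x u) = (mul t u).bind (fun y => mul s y)

/-- A `k`-semigraph: a semimultiplicative set with a degree map `d : T → ℕ^k`
satisfying the unique factorisation property. -/
structure Semigraph (k : Type*) (T : Type*) extends SemimultSet T where
  d : T → k → ℕ
  deg_mul : ∀ x y z : T, mul x y = some z → d z = d x + d y
  factor : ∀ (x : T) (n₁ n₂ : k → ℕ), d x = n₁ + n₂ →
    ∃! p : T × T, mul p.1 p.2 = some x ∧ d p.1 = n₁ ∧ d p.2 = n₂

namespace Semigraph

variable {k T : Type*}

/-- `s ≤ t` iff there is `α` with `αs` defined and `αs = t`. -/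
def le (S : Semigraph k T) (s t : T) : Prop := ∃ α : T, S.mul α s = some t

/-- The set `Δ_μ` of tuples `yμ_{α₁,…,αₙ}` (`n ≥ 1`) with `y ≤ αᵢ` for some `i`. -/
def DeltaMu (S : Semigraph k T) : Type _ :=
  { p : T × List T // p.2 ≠ [] ∧ ∃ α ∈ p.2, S.le p.1 α }

/-- `Δ = T ⊔ Δ_μ`. -/
def Delta (S : Semigraph k T) : Type _ := T ⊕ S.DeltaMu

open scoped Classical in
/-- The partial multiplication on `Δ`: products within `T` as in `T`, and
`x · (yμ_α) = (xy)μ_α` whenever `xy` is defined and `(xy)μ_α ∈ Δ_μ`;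
all other products are undefined. -/
noncomputable def deltaMul (S : Semigraph k T) : S.Delta → S.Delta → Option S.Delta
  | Sum.inl x, Sum.inl y => (S.mul x y).map Sum.inl
  | Sum.inl x, Sum.inr ⟨(y, l), hp⟩ =>
      match S.mul x y with
      | some z =>
          if h : ∃ α ∈ l, S.le z α then some (Sum.inr ⟨(z, l), ⟨hp.1, h⟩⟩)
          else none
      | none => none
  | Sum.inr _, _ => none

/-- The minimal common extension set `T^min(x,y)`. -/
def Tmin (S : Semigraph k T) (x y : T) : Set (T × T) :=
  { p | ∃ z : T, S.mul x p.1 = some z ∧ S.mul y p.2 = some z ∧ S.d z = S.d x ⊔ S.d y }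

end Semigraph

/-- The canonical basis vector `δ_t` of `ℓ²(G)`. -/
noncomputable def deltaVec {G : Type*} (t : G) : lp (fun _ : G => ℂ) 2 :=
  haveI := Classical.decEq G
  lp.single 2 t 1

/-- `la` is the family of left translation operators associated to the partial
multiplication `m`: `la s δ_t = δ_{st}` if `st` is defined, and `0` otherwise. -/
def IsLambdaFam {G : Type*} (m : G → G → Option G)
    (la : G → (lp (fun _ : G => ℂ) 2 →L[ℂ] lp (fun _ : G => ℂ) 2)) : Prop :=
  ∀ s t : G, la s (deltaVec t) = (m s t).elim 0 deltaVec

/-!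
Both sides are compared entry by entry in the basis `(δ_a)`. The `(c, b)` entry of `λ_x* λ_y`
is `1` exactly when `xc = yb`, and that of the `(e, f)` summand is `1` exactly when `c = er` and
`b = fr` for some `r` with `(yf)r` defined. Unique factorisation splits a common extension
`xc = yb` as `mr` with `d(m) = d(x) ∨ d(y)`, which yields exactly one such pair
`(e, f) ∈ T^min(x, y)`; conversely every such pair gives `xc = (xe)r = (yf)r = yb`.

An element of `Δ` is determined by its `T`-part and its list of labels (`none` on `T`), and
left multiplication by `T` acts on the `T`-part alone.
-/

namespace SemimultSet

variable {T : Type*} (M : SemimultSet T)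

theorem assoc_some {a b c ab w : T} (hab : M.mul a b = some ab) (h : M.mul ab c = some w) :
    ∃ bc, M.mul b c = some bc ∧ M.mul a bc = some w := by
  have := M.assoc a b c
  rw [hab, Option.bind_some, h] at this
  cases hbc : M.mul b c with
  | none => simp [hbc] at this
  | some bc => exact ⟨bc, rfl, by simpa [hbc] using this.symm⟩

theorem assoc_some_symm {a b c bc w : T} (hbc : M.mul b c = some bc) (h : M.mul a bc = some w) :
    ∃ ab, M.mul a b = some ab ∧ M.mul ab c = some w := by
  have := M.assoc a b c
  rw [hbc, Option.bind_some, h] at this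
  cases hab : M.mul a b with
  | none => simp [hab] at this
  | some ab => exact ⟨ab, rfl, by simpa [hab] using this⟩

end SemimultSet

namespace Semigraph

variable {k T : Type*} (S : Semigraph k T)

theorem factor_unique {a b a' b' z : T} (h : S.mul a b = some z) (h' : S.mul a' b' = some z)
    (hd : S.d a = S.d a') : a = a' ∧ b = b' := by
  have hdz := S.deg_mul _ _ _ h
  have hdb : S.d b' = S.d b := add_left_cancel ((hd ▸ S.deg_mul _ _ _ h').symm.trans hdz)
  obtain ⟨_, _, huniq⟩ := S.factor z (S.d a) (S.d b) hdz
  exact Prod.ext_iff.mp ((huniq (a, b) ⟨h, rfl, rfl⟩).trans (huniq (a', b') ⟨h', hd.symm, hdb⟩).symm)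

theorem mul_left_cancel {x a b z : T} (ha : S.mul x a = some z) (hb : S.mul x b = some z) :
    a = b :=
  (S.factor_unique ha hb rfl).2

theorem exists_mul_eq_of_le_d {z : T} {n : k → ℕ} (hn : n ≤ S.d z) :
    ∃ a b, S.mul a b = some z ∧ S.d a = n := by
  obtain ⟨⟨a, b⟩, ⟨hab, hda, -⟩, -⟩ := S.factor z n (S.d z - n) (add_tsub_cancel_of_le hn).symm
  exact ⟨a, b, hab, hda⟩

theorem exists_left_factor {x u m r z : T} (hxu : S.mul x u = some z) (hmr : S.mul m r = some z)
    (hd : S.d x ≤ S.d m) : ∃ e, S.mul x e = some m ∧ S.mul e r = some u := by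
  obtain ⟨x', e, hx'e, hdx'⟩ := S.exists_mul_eq_of_le_d hd
  obtain ⟨er, her, hx'er⟩ := S.assoc_some hx'e hmr
  obtain ⟨rfl, rfl⟩ := S.factor_unique hx'er hxu hdx'
  exact ⟨e, hx'e, her⟩

variable {S} in
theorem le.trans {u v w : T} (huv : S.le u v) (hvw : S.le v w) : S.le u w := by
  obtain ⟨a, ha⟩ := huv
  obtain ⟨b, hb⟩ := hvw
  obtain ⟨ba, -, hba⟩ := S.assoc_some_symm ha hb
  exact ⟨ba, hba⟩

theorem exists_tmin_of_mul_eq_mul {x y u t z : T} (hxu : S.mul x u = some z)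
    (hyt : S.mul y t = some z) :
    ∃ e f m r, S.mul x e = some m ∧ S.mul y f = some m ∧ S.d m = S.d x ⊔ S.d y ∧
      S.mul e r = some u ∧ S.mul f r = some t ∧ S.mul m r = some z := by
  have hx : S.d x ≤ S.d z := S.deg_mul _ _ _ hxu ▸ le_self_add
  have hy : S.d y ≤ S.d z := S.deg_mul _ _ _ hyt ▸ le_self_add
  obtain ⟨m, r, hmr, hdm⟩ := S.exists_mul_eq_of_le_d (sup_le hx hy)
  obtain ⟨e, hxe, her⟩ := S.exists_left_factor hxu hmr (hdm ▸ le_sup_left)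
  obtain ⟨f, hyf, hfr⟩ := S.exists_left_factor hyt hmr (hdm ▸ le_sup_right)
  exact ⟨e, f, m, r, hxe, hyf, hdm, her, hfr, hmr⟩

theorem tmin_eq_of_mul_eq_mul {x y e f e' f' m m' r r' w : T}
    (hp : (e, f) ∈ S.Tmin x y) (hp' : (e', f') ∈ S.Tmin x y)
    (hm : S.mul y f = some m) (hm' : S.mul y f' = some m')
    (hw : S.mul m r = some w) (hw' : S.mul m' r' = some w) : (e, f) = (e', f') := by
  obtain ⟨n, hxe, hyf, hdn⟩ := hp
  obtain ⟨n', hxe', hyf', hdn'⟩ := hp'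
  obtain rfl : n = m := Option.some.inj (hyf.symm.trans hm)
  obtain rfl : n' = m' := Option.some.inj (hyf'.symm.trans hm')
  obtain ⟨rfl, -⟩ := S.factor_unique hw hw' (hdn.trans hdn'.symm)
  exact Prod.ext (S.mul_left_cancel hxe hxe') (S.mul_left_cancel hyf hyf')

section DeltaStructure

variable {S}

def Delta.base : S.Delta → T
  | Sum.inl t => t
  | Sum.inr p => p.1.1

def Delta.labels : S.Delta → Option (List T)
  | Sum.inl _ => none
  | Sum.inr p => some p.1.2

theorem Delta.ext {r s : S.Delta} (hb : r.base = s.base) (hl : r.labels = s.labels) : r = s := by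
  rcases r with r | ⟨⟨r, l⟩, hr⟩ <;> rcases s with s | ⟨⟨s, l'⟩, hs⟩ <;>
    simp only [Delta.base, Delta.labels, reduceCtorEq, Option.some.injEq] at hb hl
  · rw [hb]
  · subst hb hl; rfl

theorem Delta.exists_of_le {c : S.Delta} {t : T} (h : S.le t c.base) :
    ∃ r : S.Delta, r.base = t ∧ r.labels = c.labels := by
  rcases c with c | ⟨⟨c, l⟩, hl, α, hα, hcα⟩
  · exact ⟨Sum.inl t, rfl, rfl⟩
  · exact ⟨Sum.inr ⟨(t, l), hl, α, hα, h.trans hcα⟩, rfl, rfl⟩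

theorem deltaMul_inl_eq_some_iff {a : T} {r w : S.Delta} :
    S.deltaMul (Sum.inl a) r = some w ↔ S.mul a r.base = some w.base ∧ w.labels = r.labels := by
  rcases r with r | ⟨⟨r, l⟩, hr⟩ <;> rcases w with w | ⟨⟨w, l'⟩, hw⟩ <;>
    simp only [deltaMul, Delta.base, Delta.labels]
  all_goals cases S.mul a r <;>
    simp only [Delta, DeltaMu, Option.map, Option.dite_none_right_eq_some, Option.some.injEq,
      Sum.inl.injEq, Sum.inr.injEq, Subtype.mk.injEq, Prod.mk.injEq, reduceCtorEq, exists_false,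
      exists_prop, and_true, and_false, false_and]
  exact ⟨fun ⟨_, hw, hl⟩ => ⟨hw, hl.symm⟩, by rintro ⟨rfl, rfl⟩; exact ⟨hw.2, rfl, rfl⟩⟩

theorem deltaMul_inr_eq_none (p : S.DeltaMu) (b : S.Delta) : S.deltaMul (Sum.inr p) b = none := by
  rcases b with b | ⟨⟨b, l⟩, hb⟩ <;> rfl

theorem deltaMul_left_cancel {s a b w : S.Delta} (ha : S.deltaMul s a = some w)
    (hb : S.deltaMul s b = some w) : a = b := by
  rcases s with x | p
  · rw [deltaMul_inl_eq_some_iff] at ha hb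
    exact Delta.ext (S.mul_left_cancel ha.1 hb.1) (ha.2.symm.trans hb.2)
  · simp [deltaMul_inr_eq_none] at ha

end DeltaStructure

theorem deltaMul_assoc {a e m : T} {r c w : S.Delta} (ham : S.mul a e = some m)
    (hc : S.deltaMul (Sum.inl e) r = some c) (hw : S.deltaMul (Sum.inl m) r = some w) :
    S.deltaMul (Sum.inl a) c = some w := by
  rw [deltaMul_inl_eq_some_iff] at hc hw ⊢
  obtain ⟨c', hc', hac'⟩ := S.assoc_some ham hw.1
  obtain rfl := Option.some.inj (hc'.symm.trans hc.1)
  exact ⟨hac', hw.2.trans hc.2.symm⟩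

theorem exists_mem_tmin_of_deltaMul_eq {x y : T} {c b w : S.Delta}
    (hc : S.deltaMul (Sum.inl x) c = some w) (hb : S.deltaMul (Sum.inl y) b = some w) :
    ∃ e f m r, (e, f) ∈ S.Tmin x y ∧ S.mul y f = some m ∧ S.deltaMul (Sum.inl e) r = some c ∧
      S.deltaMul (Sum.inl f) r = some b ∧ S.deltaMul (Sum.inl m) r = some w := by
  rw [deltaMul_inl_eq_some_iff] at hc hb
  obtain ⟨e, f, m, r₀, hxe, hyf, hdm, her, hfr, hmr⟩ := S.exists_tmin_of_mul_eq_mul hc.1 hb.1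
  obtain ⟨r, rfl, hr⟩ := Delta.exists_of_le ⟨e, her⟩
  refine ⟨e, f, m, r, ⟨m, hxe, hyf, hdm⟩, hyf, ?_, ?_, ?_⟩ <;> rw [deltaMul_inl_eq_some_iff]
  · exact ⟨her, hr.symm⟩
  · exact ⟨hfr, hb.2.symm.trans (hc.2.trans hr.symm)⟩
  · exact ⟨hmr, hc.2.trans hr.symm⟩

open scoped Classical in
theorem sum_tmin_entries {x y : T} (h : (S.Tmin x y).Finite) (c b : S.Delta) :
    ∑ p ∈ h.toFinset, (S.mul y p.2).elim 0 (fun m =>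
      if ∃ r w, S.deltaMul (Sum.inl p.1) r = some c ∧ S.deltaMul (Sum.inl p.2) r = some b ∧
        S.deltaMul (Sum.inl m) r = some w then (1 : ℂ) else 0) =
    if ∃ w, S.deltaMul (Sum.inl x) c = some w ∧ S.deltaMul (Sum.inl y) b = some w then 1 else 0 := by
  by_cases hP : ∃ w, S.deltaMul (Sum.inl x) c = some w ∧ S.deltaMul (Sum.inl y) b = some w
  · obtain ⟨w, hxc, hyb⟩ := hP
    obtain ⟨e, f, m, r, hp, hm, hc, hb, hw⟩ := S.exists_mem_tmin_of_deltaMul_eq hxc hyb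
    rw [if_pos ⟨w, hxc, hyb⟩, Finset.sum_eq_single_of_mem (e, f) (h.mem_toFinset.mpr hp), hm,
      Option.elim_some, if_pos ⟨r, w, hc, hb, hw⟩]
    rintro ⟨e', f'⟩ hp' hne
    obtain ⟨m', hxe', hm', -⟩ := h.mem_toFinset.mp hp'
    rw [hm', Option.elim_some, if_neg]
    rintro ⟨r', w', hc', -, hw'⟩
    obtain rfl : w' = w := Option.some.inj ((S.deltaMul_assoc hxe' hc' hw').symm.trans hxc)
    rw [deltaMul_inl_eq_some_iff] at hw hw'
    exact hne (S.tmin_eq_of_mul_eq_mul (h.mem_toFinset.mp hp') hp hm' hm hw'.1 hw.1)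
  · rw [if_neg hP]
    refine Finset.sum_eq_zero fun p hp => ?_
    obtain ⟨m, hxe, hyf, -⟩ := h.mem_toFinset.mp hp
    rw [hyf, Option.elim_some, if_neg]
    rintro ⟨r, w, hc, hb, hw⟩
    exact hP ⟨w, S.deltaMul_assoc hxe hc hw, S.deltaMul_assoc hyf hb hw⟩

end Semigraph

section LambdaFamily

open scoped ComplexInnerProductSpace Classical

variable {G : Type*}

theorem inner_deltaVec_left (p : G) (v : lp (fun _ : G => ℂ) 2) : ⟪deltaVec p, v⟫ = v p := by
  simp [deltaVec, lp.inner_single_left]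

theorem inner_deltaVec_deltaVec (a b : G) :
    ⟪deltaVec a, deltaVec b⟫ = if a = b then (1 : ℂ) else 0 := by
  rw [inner_deltaVec_left]
  simp [deltaVec, lp.single_apply, Pi.single_apply]

theorem lp_ext_inner_deltaVec {v w : lp (fun _ : G => ℂ) 2}
    (h : ∀ p : G, ⟪deltaVec p, v⟫ = ⟪deltaVec p, w⟫) : v = w :=
  lp.ext <| funext fun p => by simpa only [inner_deltaVec_left] using h p

theorem continuousLinearMap_ext_deltaVec
    {A B : lp (fun _ : G => ℂ) 2 →L[ℂ] lp (fun _ : G => ℂ) 2}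
    (h : ∀ t : G, A (deltaVec t) = B (deltaVec t)) : A = B := by
  refine lp.ext_continuousLinearMap ENNReal.ofNat_ne_top fun t => ContinuousLinearMap.ext_ring ?_
  simpa [deltaVec] using h t

end LambdaFamily

namespace IsLambdaFam

open scoped ComplexInnerProductSpace Classical

open ContinuousLinearMap (adjoint adjoint_inner_right)

variable {G : Type*} {m : G → G → Option G}
  {la : G → (lp (fun _ : G => ℂ) 2 →L[ℂ] lp (fun _ : G => ℂ) 2)}

theorem inner_deltaVec_adjoint_apply (hla : IsLambdaFam m la) (s p c : G) :
    ⟪deltaVec p, adjoint (la s) (deltaVec c)⟫ = if m s p = some c then 1 else 0 := by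
  rw [adjoint_inner_right, hla]
  cases m s p <;> simp [inner_deltaVec_deltaVec]

theorem adjoint_apply_of_mul_eq (hla : IsLambdaFam m la)
    (hcanc : ∀ {s a b w : G}, m s a = some w → m s b = some w → a = b)
    {s a c : G} (h : m s a = some c) : adjoint (la s) (deltaVec c) = deltaVec a := by
  refine lp_ext_inner_deltaVec fun p => ?_
  rw [hla.inner_deltaVec_adjoint_apply, inner_deltaVec_deltaVec]
  exact if_congr ⟨fun hp => hcanc hp h, fun hp => hp ▸ h⟩ rfl rfl

theorem adjoint_apply_eq_zero (hla : IsLambdaFam m la) {s c : G} (h : ∀ a, m s a ≠ some c) :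
    adjoint (la s) (deltaVec c) = 0 := by
  refine lp_ext_inner_deltaVec fun p => ?_
  rw [hla.inner_deltaVec_adjoint_apply, inner_zero_right, if_neg (h p)]

theorem inner_deltaVec_adjoint_mul_apply (hla : IsLambdaFam m la) (s t c b : G) :
    ⟪deltaVec c, (adjoint (la s) * la t) (deltaVec b)⟫ =
      if ∃ w, m s c = some w ∧ m t b = some w then 1 else 0 := by
  rw [mul_apply_eq_comp, adjoint_inner_right, hla, hla]
  cases m s c <;> cases m t b <;> simp [inner_deltaVec_deltaVec, eq_comm]

theorem inner_deltaVec_mul_adjoint_mul_mul_adjoint_apply (hla : IsLambdaFam m la)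
    (hcanc : ∀ {s a b w : G}, m s a = some w → m s b = some w → a = b) (e f z c b : G) :
    ⟪deltaVec c, (la e * (adjoint (la z) * la z) * adjoint (la f)) (deltaVec b)⟫ =
      if ∃ r w, m e r = some c ∧ m f r = some b ∧ m z r = some w then 1 else 0 := by
  simp only [mul_apply_eq_comp]
  by_cases hb : ∃ r, m f r = some b
  · obtain ⟨r, hrb⟩ := hb
    have hr : (∃ r' w, m e r' = some c ∧ m f r' = some b ∧ m z r' = some w) ↔
        ∃ w, m e r = some c ∧ m z r = some w :=
      ⟨fun ⟨r', w, hc, hb, hw⟩ => hcanc hb hrb ▸ ⟨w, hc, hw⟩, fun ⟨w, hc, hw⟩ => ⟨r, w, hc, hrb, hw⟩⟩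
    rw [if_congr hr rfl rfl, hla.adjoint_apply_of_mul_eq hcanc hrb, hla z r]
    cases hw : m z r with
    | none => simp
    | some w =>
      rw [Option.elim_some, hla.adjoint_apply_of_mul_eq hcanc hw, hla]
      cases m e r <;> simp [inner_deltaVec_deltaVec, eq_comm]
  · rw [hla.adjoint_apply_eq_zero fun r hr => hb ⟨r, hr⟩, if_neg fun ⟨r, _, _, hr, _⟩ => hb ⟨r, hr⟩]
    simp

end IsLambdaFam

theorem lambda_CK_relation_general {k T : Type*} (S : Semigraph k T)
    (hfin : ∀ x y : T, (S.Tmin x y).Finite)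
    (la : S.Delta → (lp (fun _ : S.Delta => ℂ) 2 →L[ℂ] lp (fun _ : S.Delta => ℂ) 2))
    (hla : IsLambdaFam S.deltaMul la) :
    ∀ x y : T,
      ContinuousLinearMap.adjoint (la (Sum.inl x)) * la (Sum.inl y) =
      ∑ p ∈ (hfin x y).toFinset,
        (S.mul y p.2).elim 0
          (fun z => la (Sum.inl p.1) *
            (ContinuousLinearMap.adjoint (la (Sum.inl z)) * la (Sum.inl z)) *
            ContinuousLinearMap.adjoint (la (Sum.inl p.2))) := by
  intro x y
  refine continuousLinearMap_ext_deltaVec fun b => lp_ext_inner_deltaVec fun c => ?_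
  refine (hla.inner_deltaVec_adjoint_mul_apply (Sum.inl x) (Sum.inl y) c b).trans ?_
  rw [sum_apply, inner_sum, ← S.sum_tmin_entries (hfin x y) c b]
  refine Finset.sum_congr rfl fun p _ => ?_
  cases S.mul y p.2 with
  | none => simp
  | some z =>
    exact (hla.inner_deltaVec_mul_adjoint_mul_mul_adjoint_apply S.deltaMul_left_cancel
      (Sum.inl p.1) (Sum.inl p.2) (Sum.inl z) c b).symm

/-- the Cuntz–Krieger type relation
`λ_x* λ_y = Σ_(e,f) ∈ Tmin(x,y) λ_e (λ_(yf)* λ_(yf)) λ_f*`. -/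
theorem lambda_CK_relation {k T : Type*} (S : Semigraph k T)
    (hidem : ∀ e : T, S.d e = 0 → S.mul e e = some e)
    (hfin : ∀ x y : T, (S.Tmin x y).Finite)
    (la : S.Delta → (lp (fun _ : S.Delta => ℂ) 2 →L[ℂ] lp (fun _ : S.Delta => ℂ) 2))
    (hla : IsLambdaFam S.deltaMul la) :
    ∀ x y : T,
      ContinuousLinearMap.adjoint (la (Sum.inl x)) * la (Sum.inl y) =
      ∑ p ∈ (hfin x y).toFinset,
        (S.mul y p.2).elim 0
          (fun z => la (Sum.inl p.1) *
            (ContinuousLinearMap.adjoint (la (Sum.inl z)) * la (Sum.inl z)) *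
            ContinuousLinearMap.adjoint (la (Sum.inl p.2))) :=
  lambda_CK_relation_general S hfin la hla
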